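/- arXiv:1406.4897 — 6 statements merged into one kernel-verified Lean document; each statement's English description precedes it below -/
import Mathlib

section
/- Let G be a group, H a normal subgroup of finite index with G/H abelian, and Π₁, Π₂ irreducible complex representations of G. Then the following are equivalent: (1) the restrictions Π₁|_H and Π₂|_H share an irreducible constituent; (2) Π₁|_H ≅ Π₂|_H; (3) there exists a character χ of G/H with Π₂ ≅ χΠ₁. -/
/-!
Restricted to `H`, an irreducible `P` is semisimple: it is finitely generated over `ℂ[H]` (by the
translates of a nonzero vector over coset representatives), so it has a maximal submodule `K`; the
`G`-translates of `K` are maximal too, and their intersection is `G`-stable and proper, hence zero,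
so `P|_H` embeds in a finite product of simple modules. Semisimplicity turns a common constituent
into a nonzero `H`-map `e : P₁ → P₂`. The averages `∑_{x ∈ G/H} χ(x) P₂(x)⁻¹ e P₁(x)` are
`G`-maps `χP₁ → P₂`, and by orthogonality of the characters of the finite abelian group `G/H` they
sum to a nonzero multiple of `e`; a nonzero one is an isomorphism by Schur's lemma.
-/

noncomputable section

open scoped TensorProduct DirectSum

universe u

section Defs

variable {G : Type u} [Group G]

/-- The submodule of equivariant linear maps between two representations. -/
def equivHom {M : Type*} [Monoid M] {V₁ V₂ : Type*}
    [AddCommGroup V₁] [Module ℂ V₁] [AddCommGroup V₂] [Module ℂ V₂]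
    (ρ₁ : Representation ℂ M V₁) (ρ₂ : Representation ℂ M V₂) :
    Submodule ℂ (V₁ →ₗ[ℂ] V₂) where
  carrier := {f | ∀ (m : M) (v : V₁), f (ρ₁ m v) = ρ₂ m (f v)}
  add_mem' := by intro a b ha hb m v; simp_all
  zero_mem' := by intro m v; simp
  smul_mem' := by intro c f hf m v; simp_all

instance equivHom.instAddCommGroup {M : Type*} [Monoid M] {V₁ V₂ : Type*}
    [AddCommGroup V₁] [Module ℂ V₁] [AddCommGroup V₂] [Module ℂ V₂]
    (ρ₁ : Representation ℂ M V₁) (ρ₂ : Representation ℂ M V₂) :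
    AddCommGroup ↥(equivHom ρ₁ ρ₂) :=
  Submodule.addCommGroup _

instance equivHom.instModule {M : Type*} [Monoid M] {V₁ V₂ : Type*}
    [AddCommGroup V₁] [Module ℂ V₁] [AddCommGroup V₂] [Module ℂ V₂]
    (ρ₁ : Representation ℂ M V₁) (ρ₂ : Representation ℂ M V₂) :
    Module ℂ ↥(equivHom ρ₁ ρ₂) :=
  Submodule.module _

/-- Twist of a representation by a `ℂˣ`-valued character. -/
def twist {V : Type*} [AddCommGroup V] [Module ℂ V]
    (ρ : Representation ℂ G V) (χ : G →* ℂˣ) : Representation ℂ G V where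
  toFun g := (χ g : ℂ) • ρ g
  map_one' := by simp
  map_mul' g₁ g₂ := by
    ext v
    simp [Module.End.mul_apply, LinearMap.smul_apply, map_mul, smul_smul,
      map_smul, mul_comm, mul_left_comm]

@[simp] lemma twist_apply {V : Type*} [AddCommGroup V] [Module ℂ V]
    (ρ : Representation ℂ G V) (χ : G →* ℂˣ) (g : G) (v : V) :
    twist ρ χ g v = (χ g : ℂ) • ρ g v := rfl

/-- Characters of `G` trivial on `H`, i.e. characters of `G/H`. -/
def TrivOn (H : Subgroup G) : Type u := {χ : G →* ℂˣ // ∀ h ∈ H, χ h = 1}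

/-- Irreducibility of a representation. -/
def IsIrreducibleRep {M : Type*} [Monoid M] {V : Type*} [AddCommGroup V] [Module ℂ V]
    (ρ : Representation ℂ M V) : Prop :=
  (∃ v : V, v ≠ 0) ∧
    ∀ W : Submodule ℂ V, (∀ (m : M) (v : V), v ∈ W → ρ m v ∈ W) → W = ⊥ ∨ W = ⊤

/-- Equivalence (isomorphism) of representations. -/
def RepEquiv {M : Type*} [Monoid M] {V₁ V₂ : Type*}
    [AddCommGroup V₁] [Module ℂ V₁] [AddCommGroup V₂] [Module ℂ V₂]
    (ρ₁ : Representation ℂ M V₁) (ρ₂ : Representation ℂ M V₂) : Prop :=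
  ∃ e : V₁ ≃ₗ[ℂ] V₂, ∀ (m : M) (v : V₁), e (ρ₁ m v) = ρ₂ m (e v)

/-- Restriction of a representation of `G` to a subgroup `H`. -/
def resR (H : Subgroup G) {V : Type*} [AddCommGroup V] [Module ℂ V]
    (ρ : Representation ℂ G V) : Representation ℂ H V := ρ.comp H.subtype

@[simp] lemma resR_apply (H : Subgroup G) {V : Type*} [AddCommGroup V] [Module ℂ V]
    (ρ : Representation ℂ G V) (h : H) : resR H ρ h = ρ ↑h := rfl

end Defs
section Ind

variable {G : Type u} [Group G] (H : Subgroup G)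
variable {V : Type u} [AddCommGroup V] [Module ℂ V]

/-- The space of the induced representation: functions `w : G → V` with
`w (h * g) = ρ h (w g)` for `h ∈ H`. -/
def IndSpace (ρ : Representation ℂ H V) : Submodule ℂ (G → V) where
  carrier := {w | ∀ (h : H) (g : G), w (↑h * g) = ρ h (w g)}
  add_mem' := by intro a b ha hb h g; simp_all
  zero_mem' := by intro h g; simp
  smul_mem' := by intro c a ha h g; simp_all

/-- The induced representation `Ind_H^G ρ`, acting by right translation. -/
def indRep (ρ : Representation ℂ H V) : Representation ℂ G ↥(IndSpace H ρ) where
  toFun g :=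
    { toFun := fun w => ⟨fun x => (w : G → V) (x * g), by
        intro h x
        have := w.2 h (x * g)
        simpa [mul_assoc] using this⟩
      map_add' := by intro a b; apply Subtype.ext; funext x; simp
      map_smul' := by intro c a; apply Subtype.ext; funext x; simp }
  map_one' := by
    apply LinearMap.ext; intro w; apply Subtype.ext; funext x; simp
  map_mul' := by
    intro g₁ g₂
    apply LinearMap.ext; intro w; apply Subtype.ext; funext x
    simp [Module.End.mul_apply, mul_assoc]

@[simp] lemma indRep_apply (ρ : Representation ℂ H V) (g : G) (w : ↥(IndSpace H ρ)) (x : G) :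
    ((indRep H ρ g w : ↥(IndSpace H ρ)) : G → V) x = (w : G → V) (x * g) := rfl

/-- Evaluation at `g` of functions in the induced representation. -/
def evalAt (ρ : Representation ℂ H V) (g : G) : ↥(IndSpace H ρ) →ₗ[ℂ] V where
  toFun w := (w : G → V) g
  map_add' := by intro a b; simp
  map_smul' := by intro c a; simp

@[simp] lemma evalAt_apply (ρ : Representation ℂ H V) (g : G) (w : ↥(IndSpace H ρ)) :
    evalAt H ρ g w = (w : G → V) g := rfl

/-- Extension by zero: the section `e_g^*` of `evalAt`, supported on the coset `H g`. -/
def extAt [DecidablePred (· ∈ H)] (ρ : Representation ℂ H V) (g : G) :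
    V →ₗ[ℂ] ↥(IndSpace H ρ) where
  toFun v := ⟨fun x => if hx : x * g⁻¹ ∈ H then ρ ⟨x * g⁻¹, hx⟩ v else 0, by
    intro h x
    dsimp only
    by_cases hx : x * g⁻¹ ∈ H
    · have hx' : (↑h * x) * g⁻¹ ∈ H := by
        have e : (↑h * x) * g⁻¹ = ↑h * (x * g⁻¹) := by group
        rw [e]; exact H.mul_mem h.2 hx
      rw [dif_pos hx', dif_pos hx]
      have e2 : (⟨(↑h * x) * g⁻¹, hx'⟩ : H) = h * ⟨x * g⁻¹, hx⟩ := by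
        apply Subtype.ext; simp [mul_assoc]
      rw [e2, map_mul]
      rfl
    · have hx' : ¬ ((↑h * x) * g⁻¹ ∈ H) := by
        intro hc
        apply hx
        have e : x * g⁻¹ = (↑h)⁻¹ * ((↑h * x) * g⁻¹) := by group
        rw [e]; exact H.mul_mem (H.inv_mem h.2) hc
      rw [dif_neg hx', dif_neg hx, map_zero]⟩
  map_add' := by
    intro a b; apply Subtype.ext; funext x
    by_cases hx : x * g⁻¹ ∈ H <;> simp [hx]
  map_smul' := by
    intro c a; apply Subtype.ext; funext x
    by_cases hx : x * g⁻¹ ∈ H <;> simp [hx]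

/-- The projector `p_g = e_g^* ∘ e_g` onto functions supported on `H g`. -/
def projAt [DecidablePred (· ∈ H)] (ρ : Representation ℂ H V) (g : G) :
    ↥(IndSpace H ρ) →ₗ[ℂ] ↥(IndSpace H ρ) :=
  extAt H ρ g ∘ₗ evalAt H ρ g

/-- Functoriality of induction on `H`-equivariant maps. -/
def indMap {V₁ V₂ : Type u} [AddCommGroup V₁] [Module ℂ V₁] [AddCommGroup V₂] [Module ℂ V₂]
    (ρ₁ : Representation ℂ H V₁) (ρ₂ : Representation ℂ H V₂)
    (α : V₁ →ₗ[ℂ] V₂) (hα : ∀ (h : H) (v : V₁), α (ρ₁ h v) = ρ₂ h (α v)) :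
    ↥(IndSpace H ρ₁) →ₗ[ℂ] ↥(IndSpace H ρ₂) where
  toFun w := ⟨fun x => α ((w : G → V₁) x), by
    intro h x
    dsimp only
    rw [w.2 h x, hα]⟩
  map_add' := by intro a b; apply Subtype.ext; funext x; simp
  map_smul' := by intro c a; apply Subtype.ext; funext x; simp

/-- Conjugate representation `π^g`, given by `h ↦ π (g⁻¹ h g)`. -/
def conjRep [hN : H.Normal] (ρ : Representation ℂ H V) (g : G) : Representation ℂ H V :=
  ρ.comp
    { toFun := fun h => ⟨g⁻¹ * ↑h * g, by simpa using hN.conj_mem ↑h h.2 g⁻¹⟩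
      map_one' := by apply Subtype.ext; simp
      map_mul' := by
        intro a b; apply Subtype.ext
        show g⁻¹ * ↑(a * b) * g = (g⁻¹ * ↑a * g) * (g⁻¹ * ↑b * g)
        rw [Subgroup.coe_mul]; group }

@[simp] lemma conjRep_apply [H.Normal] (ρ : Representation ℂ H V) (g : G) (h : H) (v : V) :
    conjRep H ρ g h v = ρ ⟨g⁻¹ * ↑h * g, by simpa using ‹H.Normal›.conj_mem ↑h h.2 g⁻¹⟩ v := rfl

attribute [irreducible] indRep

end Ind
section Bundled

/-- A bundled (complex, linear) representation of a group `M`. -/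
structure RepOn (M : Type u) [Group M] : Type (u + 1) where
  V : Type u
  [acg : AddCommGroup V]
  [mod : Module ℂ V]
  ρ : Representation ℂ M V

attribute [instance] RepOn.acg RepOn.mod

variable {G : Type u} [Group G]

/-- The bundled induced representation. -/
def indRepOn (H : Subgroup G) (σ : RepOn ↥H) : RepOn G :=
  { V := ↥(IndSpace H σ.ρ), ρ := indRep H σ.ρ }

/-- The bundled restriction to a subgroup. -/
def resRepOn (H : Subgroup G) (P : RepOn G) : RepOn ↥H :=
  { V := P.V, ρ := resR H P.ρ }

/-- The bundled twist by a character trivial on `H`. -/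
def twistRepOn {H : Subgroup G} (P : RepOn G) (χ : TrivOn H) : RepOn G :=
  { V := P.V, ρ := twist P.ρ χ.1 }

/-- A family of endomorphisms (one for each bundled representation) commuting with all
intertwiners between members of `C`: an endomorphism of the forgetful functor on `C`. -/
def Commutes {M : Type u} [Group M] (C : Set (RepOn M))
    (φ : ∀ π : RepOn M, π.V →ₗ[ℂ] π.V) : Prop :=
  ∀ π₁ ∈ C, ∀ π₂ ∈ C, ∀ α : π₁.V →ₗ[ℂ] π₂.V,
    (∀ m : M, α ∘ₗ π₁.ρ m = π₂.ρ m ∘ₗ α) → α ∘ₗ φ π₁ = φ π₂ ∘ₗ α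

/-- Commutation with all `H`-intertwiners between members of `C` (support in `H`). -/
def HCommutes (H : Subgroup G) (C : Set (RepOn G))
    (φ : ∀ π : RepOn G, π.V →ₗ[ℂ] π.V) : Prop :=
  ∀ π₁ ∈ C, ∀ π₂ ∈ C, ∀ α : π₁.V →ₗ[ℂ] π₂.V,
    (∀ h : H, α ∘ₗ π₁.ρ ↑h = π₂.ρ ↑h ∘ₗ α) → α ∘ₗ φ π₁ = φ π₂ ∘ₗ α

/-- The direct sum of a family of bundled representations. -/
def dsumRepOn {M : Type u} [Group M] {ι : Type u} [DecidableEq ι] (f : ι → RepOn M) :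
    RepOn M where
  V := ⨁ i, (f i).V
  ρ :=
    { toFun := fun m => DFinsupp.mapRange.linearMap (fun i => (f i).ρ m)
      map_one' := by
        have : (fun i => (f i).ρ (1 : M)) = fun i => (LinearMap.id : (f i).V →ₗ[ℂ] (f i).V) := by
          funext i; rw [map_one]; rfl
        try dsimp only
        rw [this, DFinsupp.mapRange.linearMap_id]
        rfl
      map_mul' := by
        intro m₁ m₂
        have : (fun i => (f i).ρ (m₁ * m₂)) =
            fun i => ((f i).ρ m₁) ∘ₗ ((f i).ρ m₂) := by
          funext i; rw [map_mul]; rfl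
        try dsimp only
        rw [this, DFinsupp.mapRange.linearMap_comp]
        rfl }

/-- Closure of a class of representations under subobjects, quotients and direct sums. -/
def ClosedRep {M : Type u} [Group M] (C : Set (RepOn M)) : Prop :=
  (∀ P ∈ C, ∀ σ : RepOn M, (∃ f : σ.V →ₗ[ℂ] P.V, Function.Injective f ∧
      ∀ (m : M) (v : σ.V), f (σ.ρ m v) = P.ρ m (f v)) → σ ∈ C) ∧
  (∀ P ∈ C, ∀ σ : RepOn M, (∃ f : P.V →ₗ[ℂ] σ.V, Function.Surjective f ∧
      ∀ (m : M) (v : P.V), f (P.ρ m v) = σ.ρ m (f v)) → σ ∈ C) ∧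
  (∀ (ι : Type u) (_ : DecidableEq ι) (f : ι → RepOn M),
      (∀ i, f i ∈ C) → dsumRepOn f ∈ C)

/-- The Fourier transform of a finitely supported function at a representation. -/
def fourierT {M : Type u} [Group M] (f : M →₀ ℂ) {V : Type*} [AddCommGroup V] [Module ℂ V]
    (ρ : Representation ℂ M V) : V →ₗ[ℂ] V :=
  f.sum fun g c => c • (ρ g : V →ₗ[ℂ] V)

end Bundled

section Irreducible

variable {M : Type*} [Monoid M] {V W : Type*} [AddCommGroup V] [Module ℂ V]
  [AddCommGroup W] [Module ℂ W] {ρ : Representation ℂ M V} {σ : Representation ℂ M W}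

lemma IsIrreducibleRep.nontrivial (hρ : IsIrreducibleRep ρ) : Nontrivial V :=
  let ⟨v, hv⟩ := hρ.1; ⟨⟨v, 0, hv⟩⟩

lemma IsIrreducibleRep.injective_of_mem_equivHom (hρ : IsIrreducibleRep ρ) {f : V →ₗ[ℂ] W}
    (hf : f ∈ equivHom ρ σ) (hf0 : f ≠ 0) : Function.Injective f := by
  refine LinearMap.ker_eq_bot.1 <| (hρ.2 _ fun m v hv => ?_).resolve_right
    fun h => hf0 (LinearMap.ker_eq_top.1 h)
  rw [LinearMap.mem_ker] at hv ⊢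
  rw [hf m v, hv, map_zero]

lemma IsIrreducibleRep.surjective_of_mem_equivHom (hσ : IsIrreducibleRep σ) {f : V →ₗ[ℂ] W}
    (hf : f ∈ equivHom ρ σ) (hf0 : f ≠ 0) : Function.Surjective f := by
  refine LinearMap.range_eq_top.1 <| (hσ.2 _ ?_).resolve_left
    fun h => hf0 (LinearMap.range_eq_bot.1 h)
  rintro m _ ⟨v, rfl⟩
  exact ⟨ρ m v, hf m v⟩

lemma repEquiv_of_mem_equivHom (hρ : IsIrreducibleRep ρ) (hσ : IsIrreducibleRep σ)
    {f : V →ₗ[ℂ] W} (hf : f ∈ equivHom ρ σ) (hf0 : f ≠ 0) : RepEquiv ρ σ :=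
  ⟨.ofBijective f ⟨hρ.injective_of_mem_equivHom hf hf0, hσ.surjective_of_mem_equivHom hf hf0⟩, hf⟩

lemma IsIrreducibleRep.span_orbit_eq_top (hρ : IsIrreducibleRep ρ) {v : V} (hv : v ≠ 0) :
    Submodule.span ℂ (Set.range fun m => ρ m v) = ⊤ := by
  refine (hρ.2 _ fun m w hw => ?_).resolve_left fun h => hv ?_
  · have hmap : (Submodule.span ℂ (Set.range fun m => ρ m v)).map (ρ m) ≤
        Submodule.span ℂ (Set.range fun m => ρ m v) := by
      rw [Submodule.map_span]
      refine Submodule.span_mono ?_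
      rintro _ ⟨_, ⟨n, rfl⟩, rfl⟩
      exact ⟨m * n, by simp [map_mul]⟩
    exact hmap (Submodule.mem_map_of_mem hw)
  · have hv : v ∈ Submodule.span ℂ (Set.range fun m => ρ m v) :=
      Submodule.subset_span ⟨1, by simp⟩
    simpa [h] using hv

lemma Subrepresentation.isIrreducibleRep_of_isAtom {S : Subrepresentation ρ} (hS : IsAtom S) :
    IsIrreducibleRep S.toRepresentation := by
  refine ⟨?_, fun U hU => ?_⟩
  · obtain ⟨v, hvS, hv0⟩ := Submodule.exists_mem_ne_zero_of_ne_bot (p := S.toSubmodule)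
      fun h => hS.1 (Subrepresentation.toSubmodule_injective h)
    exact ⟨⟨v, hvS⟩, by simpa using hv0⟩
  · let T : Subrepresentation ρ := ⟨U.map S.toSubmodule.subtype, by
      rintro m _ ⟨w, hw, rfl⟩
      exact ⟨_, hU m w hw, rfl⟩⟩
    have hinj := Submodule.map_injective_of_injective S.toSubmodule.injective_subtype
    rcases hS.le_iff.1 (show T ≤ S from fun _ ⟨w, _, hw⟩ => hw ▸ w.2) with h | h
    · exact .inl (hinj (by rw [Submodule.map_bot]; exact congrArg (·.toSubmodule) h))
    · exact .inr (hinj (by rw [Submodule.map_subtype_top]; exact congrArg (·.toSubmodule) h))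

end Irreducible

section Semisimple

variable {M : Type u} [Group M] {V₁ V₂ : Type u} [AddCommGroup V₁] [Module ℂ V₁]
  [AddCommGroup V₂] [Module ℂ V₂] {ρ₁ : Representation ℂ M V₁} {ρ₂ : Representation ℂ M V₂}
  [IsSemisimpleModule (MonoidAlgebra ℂ M) ρ₁.asModule]

lemma exists_ne_zero_mem_equivHom_of_common_constituent {σ : RepOn M}
    (hσ : IsIrreducibleRep σ.ρ) (h₁ : equivHom σ.ρ ρ₁ ≠ ⊥) (h₂ : equivHom σ.ρ ρ₂ ≠ ⊥) :
    ∃ e ∈ equivHom ρ₁ ρ₂, e ≠ 0 := by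
  obtain ⟨f₁, hf₁, hf₁0⟩ := Submodule.exists_mem_ne_zero_of_ne_bot h₁
  obtain ⟨f₂, hf₂, hf₂0⟩ := Submodule.exists_mem_ne_zero_of_ne_bot h₂
  let F₁ := Representation.IntertwiningMap.equivLinearMapAsModule σ.ρ ρ₁
    ⟨f₁, fun m => LinearMap.ext (hf₁ m)⟩
  let F₂ := Representation.IntertwiningMap.equivLinearMapAsModule σ.ρ ρ₂
    ⟨f₂, fun m => LinearMap.ext (hf₂ m)⟩
  obtain ⟨h, hh⟩ := IsSemisimpleModule.extension_property F₁
    (hσ.injective_of_mem_equivHom hf₁ hf₁0) F₂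
  let e := (Representation.IntertwiningMap.equivLinearMapAsModule ρ₁ ρ₂).symm h
  refine ⟨e.toLinearMap, fun m v => e.isIntertwining ρ₁ ρ₂ m v, fun he => hf₂0 ?_⟩
  ext v
  exact (LinearMap.congr_fun hh v).symm.trans (LinearMap.congr_fun he (f₁ v))

lemma exists_common_constituent_of_repEquiv [Nontrivial V₁] (h : RepEquiv ρ₁ ρ₂) :
    ∃ σ : RepOn M, IsIrreducibleRep σ.ρ ∧ equivHom σ.ρ ρ₁ ≠ ⊥ ∧ equivHom σ.ρ ρ₂ ≠ ⊥ := by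
  obtain ⟨e, he⟩ := h
  have : IsAtomic (Subrepresentation ρ₁) :=
    Subrepresentation.subrepresentationSubmoduleOrderIso.isAtomic_iff.2 inferInstance
  obtain ⟨S, hS, -⟩ := (eq_bot_or_exists_atom_le (⊤ : Subrepresentation ρ₁)).resolve_left
    fun h => bot_ne_top (congrArg (·.toSubmodule) h).symm
  have hirr := Subrepresentation.isIrreducibleRep_of_isAtom hS
  obtain ⟨v, hv⟩ := hirr.1
  have hv' : (v : V₁) ≠ 0 := by simpa using hv
  refine ⟨⟨S.toSubmodule, S.toRepresentation⟩, hirr, (Submodule.ne_bot_iff _).2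
    ⟨S.toSubmodule.subtype, fun m w => rfl, fun h0 => hv' (LinearMap.congr_fun h0 v)⟩,
    (Submodule.ne_bot_iff _).2 ⟨e.toLinearMap ∘ₗ S.toSubmodule.subtype, fun m w => he m w,
      fun h0 => hv' (e.map_eq_zero_iff.1 (LinearMap.congr_fun h0 v))⟩⟩

end Semisimple

lemma Subrepresentation.apply_mem_iff {A G V : Type*} [Semiring A] [Group G] [AddCommMonoid V]
    [Module A V] {ρ : Representation A G V} (S : Subrepresentation ρ) (g : G) {v : V} :
    ρ g v ∈ S ↔ v ∈ S :=
  ⟨fun h => by simpa using! S.apply_mem_toSubmodule g⁻¹ h, fun h => S.apply_mem_toSubmodule g h⟩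

section Clifford

variable {G : Type*} [Group G] {H : Subgroup G} [H.Normal] {V : Type*} [AddCommGroup V]
  [Module ℂ V] {P : Representation ℂ G V}

variable (P) in
def conjSubrep (g : G) (K : Subrepresentation (resR H P)) : Subrepresentation (resR H P) where
  toSubmodule := K.toSubmodule.comap (P g⁻¹)
  apply_mem_toSubmodule h v hv := by
    have hconj : g⁻¹ * h * g ∈ H := by simpa using ‹H.Normal›.conj_mem h h.2 g⁻¹
    have := K.apply_mem_toSubmodule ⟨_, hconj⟩ hv
    rw [Submodule.mem_comap]
    convert this using 1
    simp only [resR_apply, ← Module.End.mul_apply, ← map_mul]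
    group

lemma mem_conjSubrep {g : G} {K : Subrepresentation (resR H P)} {v : V} :
    v ∈ conjSubrep P g K ↔ P g⁻¹ v ∈ K := Iff.rfl

variable (P) in
def conjSubrepOrderIso (g : G) : Subrepresentation (resR H P) ≃o Subrepresentation (resR H P) where
  toFun := conjSubrep P g
  invFun := conjSubrep P g⁻¹
  left_inv K := SetLike.ext fun v => by simp [mem_conjSubrep]
  right_inv K := SetLike.ext fun v => by simp [mem_conjSubrep]
  map_rel_iff' {K L} := by
    refine ⟨fun h v hv => ?_, fun h v hv => h hv⟩
    simpa [mem_conjSubrep] using h (show P g v ∈ conjSubrep P g K by simpa [mem_conjSubrep])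

lemma conjSubrep_mul_of_mem (K : Subrepresentation (resR H P)) (g : G) {h : G} (hh : h ∈ H) :
    conjSubrep P (g * h) K = conjSubrep P g K :=
  SetLike.ext fun v => by
    rw [mem_conjSubrep, mem_conjSubrep, mul_inv_rev, map_mul, Module.End.mul_apply]
    exact K.apply_mem_iff ⟨h⁻¹, H.inv_mem hh⟩

lemma eq_zero_of_forall_mem_conjSubrep (hP : IsIrreducibleRep P)
    {K : Subrepresentation (resR H P)} (hK : K ≠ ⊤) {v : V} (hv : ∀ g, v ∈ conjSubrep P g K) :
    v = 0 := by
  let W : Submodule ℂ V := ⨅ g : G, (conjSubrep P g K).toSubmodule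
  have hmem : ∀ w, w ∈ W ↔ ∀ g, P g⁻¹ w ∈ K := fun w => Submodule.mem_iInf _
  have hW : ∀ g w, w ∈ W → P g w ∈ W := by
    intro g w hw
    rw [hmem] at hw ⊢
    intro g'
    simpa [← Module.End.mul_apply, ← map_mul, mul_assoc] using hw (g⁻¹ * g')
  rcases hP.2 W hW with h | h
  · exact (Submodule.mem_bot ℂ).1 (h ▸ (hmem v).2 hv)
  · refine absurd (SetLike.ext fun w => ?_) hK
    exact ⟨fun _ => Submodule.mem_top, fun _ => by simpa using (hmem w).1 (h ▸ Submodule.mem_top) 1⟩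

lemma moduleFinite_asModule_resR [Finite (G ⧸ H)] (hP : IsIrreducibleRep P) :
    Module.Finite (MonoidAlgebra ℂ H) (resR H P).asModule := by
  obtain ⟨v, hv⟩ := hP.1
  let N := Submodule.span (MonoidAlgebra ℂ H)
    (Set.range fun x : G ⧸ H => (resR H P).asModuleEquiv.symm (P x.out v))
  have horbit : ∀ g : G, (resR H P).asModuleEquiv.symm (P g v) ∈ N := by
    intro g
    have hg : g * (g : G ⧸ H).out⁻¹ ∈ H :=
      ‹H.Normal›.mem_comm (QuotientGroup.eq.1 (QuotientGroup.out_eq' (g : G ⧸ H)))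
    have hsmul : (resR H P).asModuleEquiv.symm (P g v) =
        MonoidAlgebra.single (⟨_, hg⟩ : H) (1 : ℂ) •
          (resR H P).asModuleEquiv.symm (P (g : G ⧸ H).out v) := by
      rw [Representation.single_smul, one_smul, LinearEquiv.apply_symm_apply]
      simp only [resR_apply, ← Module.End.mul_apply, ← map_mul, inv_mul_cancel_right]
      rfl
    rw [hsmul]
    exact N.smul_mem _ (Submodule.subset_span ⟨_, rfl⟩)
  have hN : N = ⊤ := by
    refine eq_top_iff.2 fun w _ => ?_
    have hw : (resR H P).asModuleEquiv w ∈ Submodule.span ℂ (Set.range fun g => P g v) :=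
      hP.span_orbit_eq_top hv ▸ Submodule.mem_top
    have hle : Submodule.span ℂ (Set.range fun g => P g v) ≤
        (N.restrictScalars ℂ).comap (resR H P).asModuleEquiv.symm.toLinearMap :=
      Submodule.span_le.2 (by rintro _ ⟨g, rfl⟩; exact horbit g)
    simpa using hle hw
  exact Module.finite_def.2 (Submodule.fg_def.2 ⟨_, Set.finite_range _, hN⟩)

theorem isSemisimpleModule_asModule_resR [Finite (G ⧸ H)] (hP : IsIrreducibleRep P) :
    IsSemisimpleModule (MonoidAlgebra ℂ H) (resR H P).asModule := by
  have := moduleFinite_asModule_resR (H := H) hP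
  have : Nontrivial (resR H P).asModule := hP.nontrivial
  obtain ⟨K₀, hK₀⟩ := IsCoatomic.exists_coatom (Submodule (MonoidAlgebra ℂ H) (resR H P).asModule)
  let iso := Subrepresentation.subrepresentationSubmoduleOrderIso (ρ := resR H P)
  have hK : IsCoatom (iso.symm K₀) := (iso.symm.isCoatom_iff K₀).2 hK₀
  let N : G ⧸ H → Submodule (MonoidAlgebra ℂ H) (resR H P).asModule :=
    fun x => iso (conjSubrepOrderIso P x.out (iso.symm K₀))
  have : ∀ x, IsSimpleModule (MonoidAlgebra ℂ H) ((resR H P).asModule ⧸ N x) := fun x =>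
    isSimpleModule_iff_isCoatom.2 <| (iso.isCoatom_iff _).2 <|
      ((conjSubrepOrderIso P x.out).isCoatom_iff _).2 hK
  refine IsSemisimpleModule.of_injective (LinearMap.pi fun x => (N x).mkQ)
    (LinearMap.ker_eq_bot.1 (LinearMap.ker_eq_bot'.2 fun v hv => ?_))
  refine eq_zero_of_forall_mem_conjSubrep hP hK.1 fun g => ?_
  have hv : v ∈ N g := (Submodule.Quotient.mk_eq_zero _).1 (congr_fun hv (g : G ⧸ H))
  rwa [← mul_inv_cancel_left (g : G ⧸ H).out g, conjSubrep_mul_of_mem _ _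
    (QuotientGroup.eq.1 (QuotientGroup.out_eq' (g : G ⧸ H)))]

end Clifford

lemma sum_monoidHom_units_apply_eq_zero {Q : Type*} [Group Q] [Finite Q] [Fintype (Q →* ℂˣ)]
    (hQ : ∀ a b : Q, a * b = b * a) {x : Q} (hx : x ≠ 1) :
    ∑ ψ : Q →* ℂˣ, (ψ x : ℂ) = 0 := by
  let : CommGroup Q := { ‹Group Q› with mul_comm := hQ }
  obtain ⟨ψ, hψ⟩ := CommGroup.exists_apply_ne_one_of_hasEnoughRootsOfUnity Q ℂ hx
  exact sum_hom_units_eq_zero ((Units.coeHom ℂ).comp (MonoidHom.eval x))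
    fun h => hψ (Units.ext (DFunLike.congr_fun h ψ))

lemma QuotientGroup.sum_out_mul {G : Type*} [Group G] {H : Subgroup G} [H.Normal]
    [Fintype (G ⧸ H)] {A : Type*} [AddCommMonoid A] (F : G → A)
    (hF : ∀ g, ∀ h ∈ H, F (g * h) = F g) (g₀ : G) :
    ∑ x : G ⧸ H, F (x.out * g₀) = ∑ x : G ⧸ H, F x.out := by
  calc ∑ x : G ⧸ H, F (x.out * g₀) = ∑ x : G ⧸ H, F (x * g₀).out := by
        refine Finset.sum_congr rfl fun x _ => ?_
        have h : (x.out * g₀)⁻¹ * (x * g₀).out ∈ H := QuotientGroup.eq.1 (by simp)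
        rw [← hF _ _ h, mul_inv_cancel_left]
    _ = ∑ x : G ⧸ H, F x.out := Equiv.sum_comp (Equiv.mulRight (g₀ : G ⧸ H)) (F ·.out)

def TrivOn.ofQuotient {G : Type u} [Group G] {H : Subgroup G} [H.Normal] (ψ : G ⧸ H →* ℂˣ) :
    TrivOn H :=
  ⟨ψ.comp (QuotientGroup.mk' H), fun h hh => by simp [(QuotientGroup.eq_one_iff h).2 hh]⟩

lemma IsIrreducibleRep.twist {G : Type*} [Group G] {V : Type*} [AddCommGroup V] [Module ℂ V]
    {P : Representation ℂ G V} (hP : IsIrreducibleRep P) (χ : G →* ℂˣ) :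
    IsIrreducibleRep (twist P χ) :=
  ⟨hP.1, fun W hW => hP.2 W fun g v hv => by
    simpa [twist_apply, ← Units.smul_def, Submodule.smul_mem_iff'] using hW g v hv⟩

lemma repEquiv_resR_of_repEquiv_twist {G : Type u} [Group G] {H : Subgroup G}
    {V₁ V₂ : Type*} [AddCommGroup V₁] [Module ℂ V₁] [AddCommGroup V₂] [Module ℂ V₂]
    {P₁ : Representation ℂ G V₁} {P₂ : Representation ℂ G V₂} {χ : TrivOn H}
    (h : RepEquiv (twist P₁ χ.1) P₂) : RepEquiv (resR H P₁) (resR H P₂) :=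
  let ⟨e, he⟩ := h
  ⟨e, fun x v => by simpa [χ.2 x x.2] using he x v⟩

section Averaging

variable {G : Type u} [Group G] {H : Subgroup G} [H.Normal] {V₁ V₂ : Type*}
  [AddCommGroup V₁] [Module ℂ V₁] [AddCommGroup V₂] [Module ℂ V₂]
  (P₁ : Representation ℂ G V₁) (P₂ : Representation ℂ G V₂) {e : V₁ →ₗ[ℂ] V₂}

def conjLinearMap (e : V₁ →ₗ[ℂ] V₂) (g : G) : V₁ →ₗ[ℂ] V₂ := P₂ g⁻¹ ∘ₗ e ∘ₗ P₁ g

lemma conjLinearMap_mul (e : V₁ →ₗ[ℂ] V₂) (g g₀ : G) :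
    conjLinearMap P₁ P₂ e (g * g₀) = P₂ g₀⁻¹ ∘ₗ conjLinearMap P₁ P₂ e g ∘ₗ P₁ g₀ := by
  simp only [conjLinearMap, mul_inv_rev, map_mul, Module.End.mul_eq_comp, LinearMap.comp_assoc]

lemma conjLinearMap_mem_equivHom (he : e ∈ equivHom (resR H P₁) (resR H P₂)) (g : G) :
    conjLinearMap P₁ P₂ e g ∈ equivHom (resR H P₁) (resR H P₂) := by
  intro h v
  have hconj : g * h * g⁻¹ ∈ H := ‹H.Normal›.conj_mem h h.2 g
  have key := he ⟨_, hconj⟩ (P₁ g v)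
  simp only [resR_apply, ← Module.End.mul_apply, ← map_mul, inv_mul_cancel_right] at key
  simp only [conjLinearMap, LinearMap.comp_apply, resR_apply, ← Module.End.mul_apply, ← map_mul,
    key]
  group

lemma conjLinearMap_mul_of_mem (he : e ∈ equivHom (resR H P₁) (resR H P₂)) (g : G) {h : G}
    (hh : h ∈ H) : conjLinearMap P₁ P₂ e (g * h) = conjLinearMap P₁ P₂ e g := by
  ext v
  have key := conjLinearMap_mem_equivHom P₁ P₂ he g ⟨h, hh⟩ v
  simp only [resR_apply] at key
  simp [conjLinearMap_mul, key, ← Module.End.mul_apply, ← map_mul]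

lemma conjLinearMap_of_mem (he : e ∈ equivHom (resR H P₁) (resR H P₂)) {h : G} (hh : h ∈ H) :
    conjLinearMap P₁ P₂ e h = e := by
  simpa [conjLinearMap, Module.End.one_eq_id] using conjLinearMap_mul_of_mem P₁ P₂ he 1 hh

variable [Fintype (G ⧸ H)]

def twistAvg (e : V₁ →ₗ[ℂ] V₂) (χ : TrivOn H) : V₁ →ₗ[ℂ] V₂ :=
  ∑ x : G ⧸ H, (χ.1 x.out : ℂ) • conjLinearMap P₁ P₂ e x.out

lemma twistAvg_mem_equivHom (he : e ∈ equivHom (resR H P₁) (resR H P₂)) (χ : TrivOn H) :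
    twistAvg P₁ P₂ e χ ∈ equivHom (twist P₁ χ.1) P₂ := by
  intro g₀ v
  let F : G → V₁ →ₗ[ℂ] V₂ := fun g => (χ.1 g : ℂ) • conjLinearMap P₁ P₂ e g
  have hF : ∀ g, ∀ h ∈ H, F (g * h) = F g := fun g h hh => by
    simp only [F, map_mul, χ.2 h hh, mul_one, conjLinearMap_mul_of_mem P₁ P₂ he g hh]
  calc twistAvg P₁ P₂ e χ (twist P₁ χ.1 g₀ v)
      = P₂ g₀ (∑ x : G ⧸ H, F (x.out * g₀) v) := by
        simp only [twistAvg, F, twist_apply, LinearMap.sum_apply, LinearMap.smul_apply, map_sum,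
          map_smul, Finset.smul_sum, conjLinearMap_mul, LinearMap.comp_apply]
        refine Finset.sum_congr rfl fun x _ => ?_
        rw [map_mul, Units.val_mul, mul_smul, smul_comm, ← Module.End.mul_apply, ← map_mul,
          mul_inv_cancel, map_one, Module.End.one_apply]
    _ = P₂ g₀ (twistAvg P₁ P₂ e χ v) := by
        rw [← LinearMap.sum_apply, QuotientGroup.sum_out_mul F hF g₀]
        simp [twistAvg, F, LinearMap.sum_apply]

lemma sum_twistAvg_ofQuotient [Fintype (G ⧸ H →* ℂˣ)] (hab : ∀ a b : G ⧸ H, a * b = b * a)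
    (he : e ∈ equivHom (resR H P₁) (resR H P₂)) :
    ∑ ψ : G ⧸ H →* ℂˣ, twistAvg P₁ P₂ e (TrivOn.ofQuotient ψ) =
      (Fintype.card (G ⧸ H →* ℂˣ) : ℂ) • e := by
  simp only [twistAvg, TrivOn.ofQuotient, MonoidHom.comp_apply, QuotientGroup.mk'_apply,
    QuotientGroup.out_eq']
  rw [Finset.sum_comm]
  simp_rw [← Finset.sum_smul]
  rw [Fintype.sum_eq_single 1 fun x hx => by
    rw [sum_monoidHom_units_apply_eq_zero hab hx, zero_smul]]
  have h1 : (1 : G ⧸ H).out ∈ H := (QuotientGroup.eq_one_iff _).1 (QuotientGroup.out_eq' 1)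
  simp [conjLinearMap_of_mem P₁ P₂ he h1]

end Averaging

theorem exists_repEquiv_twist_of_ne_zero_mem_equivHom {G : Type u} [Group G] {H : Subgroup G}
    [H.Normal] [Finite (G ⧸ H)] (hab : ∀ a b : G ⧸ H, a * b = b * a)
    {V₁ V₂ : Type*} [AddCommGroup V₁] [Module ℂ V₁] [AddCommGroup V₂] [Module ℂ V₂]
    {P₁ : Representation ℂ G V₁} {P₂ : Representation ℂ G V₂}
    (h₁ : IsIrreducibleRep P₁) (h₂ : IsIrreducibleRep P₂) {e : V₁ →ₗ[ℂ] V₂}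
    (he : e ∈ equivHom (resR H P₁) (resR H P₂)) (he0 : e ≠ 0) :
    ∃ χ : TrivOn H, RepEquiv (twist P₁ χ.1) P₂ := by
  have := Fintype.ofFinite (G ⧸ H)
  have := Fintype.ofFinite (G ⧸ H →* ℂˣ)
  obtain ⟨ψ, hψ⟩ : ∃ ψ : G ⧸ H →* ℂˣ, twistAvg P₁ P₂ e (TrivOn.ofQuotient ψ) ≠ 0 := by
    by_contra! h
    have hsum := sum_twistAvg_ofQuotient P₁ P₂ hab he
    simp only [h, Finset.sum_const_zero] at hsum
    exact he0 ((smul_eq_zero.1 hsum.symm).resolve_left (by simp [Fintype.card_ne_zero]))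
  exact ⟨_, repEquiv_of_mem_equivHom (h₁.twist _) h₂ (twistAvg_mem_equivHom P₁ P₂ he _) hψ⟩

/-- For `H ◁ G` of finite index with `G/H` abelian and irreducible
representations `P₁, P₂` of `G`, the following are equivalent: (1) the restrictions to `H`
share an irreducible constituent; (2) the restrictions to `H` are isomorphic; (3) `P₂` is
isomorphic to a twist of `P₁` by a character of `G/H`. -/
theorem statement1 {G : Type u} [Group G] (H : Subgroup G) [H.Normal] [Finite (G ⧸ H)]
    (hab : ∀ a b : G ⧸ H, a * b = b * a)
    {V₁ V₂ : Type u} [AddCommGroup V₁] [Module ℂ V₁] [AddCommGroup V₂] [Module ℂ V₂]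
    (P₁ : Representation ℂ G V₁) (P₂ : Representation ℂ G V₂)
    (h₁ : IsIrreducibleRep P₁) (h₂ : IsIrreducibleRep P₂) :
    ((∃ σ : RepOn ↥H, IsIrreducibleRep σ.ρ ∧
        equivHom σ.ρ (resR H P₁) ≠ ⊥ ∧ equivHom σ.ρ (resR H P₂) ≠ ⊥) ↔
      RepEquiv (resR H P₁) (resR H P₂)) ∧
    (RepEquiv (resR H P₁) (resR H P₂) ↔
      ∃ χ : TrivOn H, RepEquiv (twist P₁ χ.1) P₂) := by
  have := isSemisimpleModule_asModule_resR (H := H) h₁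
  have := h₁.nontrivial
  have h32 : (∃ χ : TrivOn H, RepEquiv (twist P₁ χ.1) P₂) →
      RepEquiv (resR H P₁) (resR H P₂) := fun ⟨_, h⟩ => repEquiv_resR_of_repEquiv_twist h
  have h23 : RepEquiv (resR H P₁) (resR H P₂) →
      ∃ χ : TrivOn H, RepEquiv (twist P₁ χ.1) P₂ := fun ⟨e, he⟩ =>
    exists_repEquiv_twist_of_ne_zero_mem_equivHom hab h₁ h₂ (e := e.toLinearMap) he fun h0 =>
      let ⟨v, hv⟩ := h₁.1; hv (e.map_eq_zero_iff.1 (LinearMap.congr_fun h0 v))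
  refine ⟨⟨fun ⟨σ, hσ, hσ₁, hσ₂⟩ => h32 ?_, exists_common_constituent_of_repEquiv⟩, h23, h32⟩
  obtain ⟨e, he, he0⟩ := exists_ne_zero_mem_equivHom_of_common_constituent hσ hσ₁ hσ₂
  exact exists_repEquiv_twist_of_ne_zero_mem_equivHom hab h₁ h₂ he he0
end
end

section
/- Let G be a group and H a normal subgroup of finite index with G/H abelian. For any representation Π of G there is a natural G-isomorphism Ind_H^G(Π|_H) ≅ ⊕_{χ ∈ X_H} χΠ, where the sum runs over all characters χ of the finite abelian group G/H. -/
noncomputable section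

open scoped TensorProduct DirectSum

universe u

/-! Untwisting by `ρ`, `w ↦ (x ↦ ρ x⁻¹ (w x))`, identifies `Ind_H^G (ρ|_H)` with the space of all
functions `G ⧸ H → V`, on which `g` acts by `f ↦ ρ g ∘ f ∘ (· * g)`. The Fourier transform on the
finite abelian group `G ⧸ H` turns right translation by `g` into multiplication by `χ g` on the
`χ`-component. Both identifications commute with every `G`-map `P₁ → P₂`. -/

section Fourier

variable {Q : Type*} [CommGroup Q]

instance [Finite Q] : Finite (Q →* ℂˣ) :=
  .of_equiv _ (CommGroup.monoidHom_mulEquiv_of_hasEnoughRootsOfUnity Q ℂ).some.toEquiv.symm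

variable [Fintype Q]

open Classical in
lemma MonoidHom.sum_units_val_eq_ite (χ : Q →* ℂˣ) :
    ∑ q, (χ q : ℂ) = if χ = 1 then (Fintype.card Q : ℂ) else 0 := by
  have hχ : (Units.coeHom ℂ).comp χ = 1 ↔ χ = 1 := by
    simp only [MonoidHom.ext_iff, MonoidHom.comp_apply, Units.coeHom_apply,
      MonoidHom.one_apply, Units.val_eq_one]
  simpa only [hχ, Nat.cast_ite, Nat.cast_zero, MonoidHom.comp_apply, Units.coeHom_apply] using
    sum_hom_units ((Units.coeHom ℂ).comp χ)

open Classical in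
lemma MonoidHom.sum_units_val_apply_eq_ite [Fintype (Q →* ℂˣ)] (q : Q) :
    ∑ χ : Q →* ℂˣ, (χ q : ℂ) = if q = 1 then (Fintype.card (Q →* ℂˣ) : ℂ) else 0 := by
  have hq : (Units.coeHom ℂ).comp (MonoidHom.eval q) = 1 ↔ q = 1 := by
    refine ⟨fun h => ?_, fun h => by ext χ; simp [h]⟩
    by_contra hne
    obtain ⟨χ, hχ⟩ := CommGroup.exists_apply_ne_one_of_hasEnoughRootsOfUnity Q ℂ hne
    exact hχ (Units.ext (DFunLike.congr_fun h χ))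
  simpa only [hq, Nat.cast_ite, Nat.cast_zero, MonoidHom.comp_apply, Units.coeHom_apply,
    MonoidHom.eval_apply_apply] using sum_hom_units ((Units.coeHom ℂ).comp (MonoidHom.eval q))

lemma Fintype.card_monoidHom_units_complex [Fintype (Q →* ℂˣ)] :
    Fintype.card (Q →* ℂˣ) = Fintype.card Q := by
  simpa only [Nat.card_eq_fintype_card] using
    CommGroup.card_monoidHom_of_hasEnoughRootsOfUnity Q ℂ

variable [Fintype (Q →* ℂˣ)] {V : Type*} [AddCommGroup V] [Module ℂ V]

def fourierEquiv : (Q → V) ≃ₗ[ℂ] ((Q →* ℂˣ) → V) where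
  toFun f χ := ∑ q, (χ q⁻¹ : ℂ) • f q
  invFun v q := (Fintype.card Q : ℂ)⁻¹ • ∑ χ, (χ q : ℂ) • v χ
  map_add' f f' := by ext χ; simp [smul_add, Finset.sum_add_distrib]
  map_smul' c f := by ext χ; simp [Finset.smul_sum, smul_comm c]
  left_inv f := by
    classical
    ext q
    have hQ : (Fintype.card Q : ℂ) ≠ 0 := Nat.cast_ne_zero.mpr Fintype.card_ne_zero
    have hsum : ∑ χ : Q →* ℂˣ, (χ q : ℂ) • ∑ p, (χ p⁻¹ : ℂ) • f p
        = (Fintype.card Q : ℂ) • f q := by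
      simp_rw [Finset.smul_sum, smul_smul, ← Units.val_mul, ← map_mul]
      rw [Finset.sum_comm]
      simp_rw [← Finset.sum_smul, MonoidHom.sum_units_val_apply_eq_ite, mul_inv_eq_one, ite_smul,
        zero_smul, Fintype.card_monoidHom_units_complex]
      simp
    simp only [hsum, inv_smul_smul₀ hQ]
  right_inv v := by
    classical
    ext χ
    have hQ : (Fintype.card Q : ℂ) ≠ 0 := Nat.cast_ne_zero.mpr Fintype.card_ne_zero
    have hsum : ∑ q, (χ q⁻¹ : ℂ) • ∑ ψ : Q →* ℂˣ, (ψ q : ℂ) • v ψ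
        = (Fintype.card Q : ℂ) • v χ := by
      have hmul (q : Q) (ψ : Q →* ℂˣ) : (χ q⁻¹ : ℂ) * ψ q = ((χ⁻¹ * ψ) q : ℂ) := by
        simp
      simp_rw [Finset.smul_sum, smul_smul, hmul]
      rw [Finset.sum_comm]
      simp_rw [← Finset.sum_smul, MonoidHom.sum_units_val_eq_ite, inv_mul_eq_one (G := Q →* ℂˣ),
        ite_smul, zero_smul]
      simp
    simp only [← Finset.smul_sum, smul_comm _ (Fintype.card Q : ℂ)⁻¹, hsum, inv_smul_smul₀ hQ]

lemma fourierEquiv_apply (f : Q → V) (χ : Q →* ℂˣ) :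
    fourierEquiv f χ = ∑ q, (χ q⁻¹ : ℂ) • f q := rfl

lemma fourierEquiv_comp_mulRight (f : Q → V) (a : Q) (χ : Q →* ℂˣ) :
    fourierEquiv (fun q => f (q * a)) χ = (χ a : ℂ) • fourierEquiv f χ := by
  simp only [fourierEquiv_apply, Finset.smul_sum, smul_smul]
  refine Fintype.sum_equiv (Equiv.mulRight a) _ _ fun q => ?_
  simp only [Equiv.coe_mulRight, ← Units.val_mul, ← map_mul, mul_inv_rev, mul_inv_cancel_left]

lemma fourierEquiv_comp_linearMap {W : Type*} [AddCommGroup W] [Module ℂ W] (A : V →ₗ[ℂ] W)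
    (f : Q → V) (χ : Q →* ℂˣ) :
    fourierEquiv (fun q => A (f q)) χ = A (fourierEquiv f χ) := by
  simp only [fourierEquiv_apply, map_sum, map_smul]

end Fourier

def TrivOn.equivQuotientChar {G : Type u} [Group G] (H : Subgroup G) [H.Normal] :
    TrivOn H ≃ (G ⧸ H →* ℂˣ) where
  toFun χ := QuotientGroup.lift H χ.1 χ.2
  invFun φ := ⟨φ.comp (QuotientGroup.mk' H), fun h hh => by
    rw [MonoidHom.comp_apply, QuotientGroup.mk'_apply, (QuotientGroup.eq_one_iff h).mpr hh,
      map_one]⟩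
  left_inv χ := rfl
  right_inv φ := MonoidHom.ext fun q => QuotientGroup.induction_on q fun _ => rfl

@[simp] lemma TrivOn.equivQuotientChar_apply_mk {G : Type u} [Group G] (H : Subgroup G)
    [H.Normal] (χ : TrivOn H) (g : G) : TrivOn.equivQuotientChar H χ g = χ.1 g := rfl

section Untwist

variable {G : Type u} [Group G] (H : Subgroup G) [H.Normal]
variable {V : Type u} [AddCommGroup V] [Module ℂ V] (ρ : Representation ℂ G V)

lemma IndSpace.inv_apply_eq_of_mk_eq (w : IndSpace H (resR H ρ)) {x y : G}
    (hxy : (x : G ⧸ H) = y) : ρ x⁻¹ (w.1 x) = ρ y⁻¹ (w.1 y) := by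
  have hw := w.2 ⟨x / y, QuotientGroup.eq_iff_div_mem.mp hxy⟩ y
  simp only [div_mul_cancel, resR_apply] at hw
  rw [hw, ← Module.End.mul_apply, ← map_mul, div_eq_mul_inv, inv_mul_cancel_left]

def indResEquiv : IndSpace H (resR H ρ) ≃ₗ[ℂ] (G ⧸ H → V) where
  toFun w q := Quotient.liftOn' q (fun x => ρ x⁻¹ (w.1 x))
    fun _ _ hxy => IndSpace.inv_apply_eq_of_mk_eq H ρ w (Quotient.sound' hxy)
  invFun f := ⟨fun x => ρ x (f x), fun h x => by
    dsimp only
    rw [resR_apply, map_mul, Module.End.mul_apply,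
      QuotientGroup.eq_iff_div_mem.mpr (by simp : ↑h * x / x ∈ H)]⟩
  map_add' w w' := funext fun q => QuotientGroup.induction_on q fun x => map_add _ _ _
  map_smul' c w := funext fun q => QuotientGroup.induction_on q fun x => map_smul _ _ _
  left_inv w := Subtype.ext <| funext fun x => ρ.self_inv_apply x _
  right_inv f := funext fun q => QuotientGroup.induction_on q fun x => ρ.inv_self_apply x _

@[simp] lemma indResEquiv_apply_mk (w : IndSpace H (resR H ρ)) (x : G) :
    indResEquiv H ρ w x = ρ x⁻¹ (w.1 x) := rfl

lemma indResEquiv_indRep (g : G) (w : IndSpace H (resR H ρ)) (q : G ⧸ H) :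
    indResEquiv H ρ (indRep H (resR H ρ) g w) q = ρ g (indResEquiv H ρ w (q * g)) := by
  induction q using QuotientGroup.induction_on with | H x => ?_
  rw [← QuotientGroup.mk_mul, indResEquiv_apply_mk, indResEquiv_apply_mk, indRep_apply,
    ← Module.End.mul_apply, ← map_mul, mul_inv_rev, mul_inv_cancel_left]

lemma indResEquiv_indMap {V' : Type u} [AddCommGroup V'] [Module ℂ V']
    (ρ' : Representation ℂ G V') (α : V →ₗ[ℂ] V') (hα : ∀ g v, α (ρ g v) = ρ' g (α v))
    (w : IndSpace H (resR H ρ)) (q : G ⧸ H) :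
    indResEquiv H ρ' (indMap H (resR H ρ) (resR H ρ') α (fun h v => hα h v) w) q
      = α (indResEquiv H ρ w q) := by
  induction q using QuotientGroup.induction_on with | H x => ?_
  exact (hα x⁻¹ _).symm

end Untwist

/-- For `H ◁ G` of finite index with `G/H` abelian, there is a natural
`G`-isomorphism `Ind_H^G (P|_H) ≅ ⊕_{χ ∈ X_H} χP` for every representation `P` of `G`;
the target carries the componentwise twisted action, and the isomorphism is functorial
in `P`. -/
theorem statement2 {G : Type u} [Group G] (H : Subgroup G) [H.Normal] [Finite (G ⧸ H)]
    (hab : ∀ a b : G ⧸ H, a * b = b * a) :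
    ∃ e : ∀ P : RepOn G, ↥(IndSpace H (resR H P.ρ)) ≃ₗ[ℂ] (⨁ _χ : TrivOn H, P.V),
      (∀ (P : RepOn G) (g : G) (w : ↥(IndSpace H (resR H P.ρ))) (χ : TrivOn H),
          e P (indRep H (resR H P.ρ) g w) χ = (χ.1 g : ℂ) • P.ρ g (e P w χ)) ∧
      (∀ (P₁ P₂ : RepOn G) (α : P₁.V →ₗ[ℂ] P₂.V)
          (hα : ∀ (g : G) (v : P₁.V), α (P₁.ρ g v) = P₂.ρ g (α v))
          (w : ↥(IndSpace H (resR H P₁.ρ))) (χ : TrivOn H),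
          e P₂ (indMap H (resR H P₁.ρ) (resR H P₂.ρ) α (fun h v => hα ↑h v) w) χ
            = α (e P₁ w χ)) := by
  let : CommGroup (G ⧸ H) := { (inferInstance : Group (G ⧸ H)) with mul_comm := hab }
  let : Fintype (G ⧸ H) := Fintype.ofFinite _
  let : Fintype (G ⧸ H →* ℂˣ) := Fintype.ofFinite _
  let : Fintype (TrivOn H) := Fintype.ofEquiv _ (TrivOn.equivQuotientChar H).symm
  let e (P : RepOn G) : IndSpace H (resR H P.ρ) ≃ₗ[ℂ] ⨁ _χ : TrivOn H, P.V :=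
    (indResEquiv H P.ρ).trans <| fourierEquiv.trans <|
      (LinearEquiv.funCongrLeft ℂ P.V (TrivOn.equivQuotientChar H)).trans
        (DirectSum.linearEquivFunOnFintype ℂ (TrivOn H) fun _ => P.V).symm
  have he (P : RepOn G) (w : IndSpace H (resR H P.ρ)) (χ : TrivOn H) :
      e P w χ = fourierEquiv (indResEquiv H P.ρ w) (TrivOn.equivQuotientChar H χ) := rfl
  refine ⟨e, fun P g w χ => ?_, fun P₁ P₂ α hα w χ => ?_⟩
  · rw [he, he, funext (indResEquiv_indRep H P.ρ g w), fourierEquiv_comp_linearMap (P.ρ g)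
      (fun q => indResEquiv H P.ρ w (q * g)), fourierEquiv_comp_mulRight, map_smul,
      TrivOn.equivQuotientChar_apply_mk]
  · rw [he, he, funext (indResEquiv_indMap H P₁.ρ P₂.ρ α hα w), fourierEquiv_comp_linearMap]
end
end

section
/- Let G be a group and H ◁ G of finite index. For a representation π of H, the restriction of the induced representation decomposes as (Ind_H^G π)|_H ≅ ⊕_{g ∈ G/H} π^g, realized by the evaluation maps e_g : Ind_H^G π → π^g, w ↦ w(g), with sections e_g* extending by zero; the projectors p_g = e_g* ∘ e_g satisfy p_s p_t = p_s if s ≡ t mod H, p_s p_t = 0 otherwise, and ∑_{g ∈ G/H} p_g = Id. -/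
noncomputable section

open scoped TensorProduct DirectSum

universe u

/-!
A function `w` in the induced space is determined on each coset `H g` by its value at `g`,
since `w (h * g) = π h (w g)`. Hence evaluating the extension by zero from `t` at `s` gives
`π (s * t⁻¹)` if `s * t⁻¹ ∈ H` and `0` otherwise, which yields the projector relations, and
evaluation at a transversal `R` of `G/H` is a linear isomorphism onto `G ⧸ H → V` with
inverse `v ↦ ∑ₓ e_{R x}^* (v x)`.
-/

namespace IndSpace

variable {G : Type u} [Group G] {H : Subgroup G}
variable {V : Type u} [AddCommGroup V] [Module ℂ V] {π : Representation ℂ H V}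

lemma apply_eq_of_mul_inv_mem (w : ↥(IndSpace H π)) {a b : G} (hab : a * b⁻¹ ∈ H) :
    (w : G → V) a = π ⟨a * b⁻¹, hab⟩ ((w : G → V) b) := by
  simpa using w.2 ⟨a * b⁻¹, hab⟩ b

end IndSpace

section Evaluation

variable {G : Type u} [Group G] (H : Subgroup G)
variable {V : Type u} [AddCommGroup V] [Module ℂ V] (π : Representation ℂ H V)

lemma evalAt_eq_comp_of_mul_inv_mem {a b : G} (hab : a * b⁻¹ ∈ H) :
    evalAt H π a = π ⟨a * b⁻¹, hab⟩ ∘ₗ evalAt H π b :=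
  LinearMap.ext fun w => IndSpace.apply_eq_of_mul_inv_mem w hab

lemma evalAt_indRep_of_mem [H.Normal] (g : G) (h : H) (w : ↥(IndSpace H π)) :
    evalAt H π g (indRep H π ↑h w) = conjRep H π g⁻¹ h (evalAt H π g w) := by
  have hmem : g * ↑h * g⁻¹ ∈ H := by simpa using ‹H.Normal›.conj_mem ↑h h.2 g
  simpa using IndSpace.apply_eq_of_mul_inv_mem w hmem

variable [DecidablePred (· ∈ H)]

lemma evalAt_extAt_of_mul_inv_mem {s t : G} (hst : s * t⁻¹ ∈ H) (v : V) :
    evalAt H π s (extAt H π t v) = π ⟨s * t⁻¹, hst⟩ v :=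
  dif_pos hst

lemma evalAt_extAt_of_mul_inv_not_mem {s t : G} (hst : s * t⁻¹ ∉ H) (v : V) :
    evalAt H π s (extAt H π t v) = 0 :=
  dif_neg hst

lemma evalAt_comp_extAt (g : G) : evalAt H π g ∘ₗ extAt H π g = LinearMap.id := by
  ext v
  have hg : g * g⁻¹ ∈ H := by simp
  rw [LinearMap.comp_apply, evalAt_extAt_of_mul_inv_mem H π hg,
    show (⟨g * g⁻¹, hg⟩ : H) = 1 from Subtype.ext (mul_inv_cancel g), map_one]
  rfl

lemma evalAt_comp_extAt_of_mul_inv_not_mem {s t : G} (hst : s * t⁻¹ ∉ H) :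
    evalAt H π s ∘ₗ extAt H π t = 0 :=
  LinearMap.ext (evalAt_extAt_of_mul_inv_not_mem H π hst)

lemma projAt_comp_projAt_of_mul_inv_mem {s t : G} (hst : s * t⁻¹ ∈ H) :
    projAt H π s ∘ₗ projAt H π t = projAt H π s := by
  ext w : 1
  simp only [projAt, LinearMap.comp_apply]
  rw [evalAt_extAt_of_mul_inv_mem H π hst, evalAt_eq_comp_of_mul_inv_mem H π hst,
    LinearMap.comp_apply]

lemma projAt_comp_projAt_of_mul_inv_not_mem {s t : G} (hst : s * t⁻¹ ∉ H) :
    projAt H π s ∘ₗ projAt H π t = 0 := by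
  simp only [projAt, LinearMap.comp_assoc]
  rw [← LinearMap.comp_assoc (evalAt H π t), evalAt_comp_extAt_of_mul_inv_not_mem H π hst]
  simp

end Evaluation

section Transversal

variable {G : Type u} [Group G] (H : Subgroup G) [H.Normal]
variable {V : Type u} [AddCommGroup V] [Module ℂ V] (π : Representation ℂ H V)
variable {R : G ⧸ H → G}

lemma mul_inv_mem_iff_mk_eq (hR : ∀ x, QuotientGroup.mk (R x) = x) (g : G) (x : G ⧸ H) :
    g * (R x)⁻¹ ∈ H ↔ (g : G ⧸ H) = x := by
  rw [← div_eq_mul_inv, ← QuotientGroup.eq_iff_div_mem, hR]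

variable [DecidablePred (· ∈ H)] [Fintype (G ⧸ H)]

lemma sum_projAt_transversal (hR : ∀ x, QuotientGroup.mk (R x) = x) :
    ∑ x : G ⧸ H, projAt H π (R x) = LinearMap.id := by
  ext w : 1
  refine Subtype.ext (funext fun y => ?_)
  change evalAt H π y _ = evalAt H π y w
  rw [LinearMap.sum_apply, map_sum, Finset.sum_eq_single_of_mem (y : G ⧸ H) (Finset.mem_univ _)]
  · have hy := (mul_inv_mem_iff_mk_eq H hR y y).2 rfl
    rw [projAt, LinearMap.comp_apply, evalAt_extAt_of_mul_inv_mem H π hy,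
      evalAt_eq_comp_of_mul_inv_mem H π hy, LinearMap.comp_apply]
  · intro x _ hx
    refine evalAt_extAt_of_mul_inv_not_mem H π ?_ _
    rw [mul_inv_mem_iff_mk_eq H hR]
    exact Ne.symm hx

variable (R) in
def evalTransversal : ↥(IndSpace H π) →ₗ[ℂ] (G ⧸ H → V) :=
  LinearMap.pi fun x => evalAt H π (R x)

variable (R) in
def extTransversal : (G ⧸ H → V) →ₗ[ℂ] ↥(IndSpace H π) :=
  ∑ x : G ⧸ H, extAt H π (R x) ∘ₗ LinearMap.proj x

lemma extTransversal_comp_evalTransversal (hR : ∀ x, QuotientGroup.mk (R x) = x) :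
    extTransversal H π R ∘ₗ evalTransversal H π R = LinearMap.id := by
  rw [← sum_projAt_transversal H π hR]
  ext w : 1
  simp only [extTransversal, LinearMap.comp_apply, LinearMap.sum_apply]
  rfl

lemma evalTransversal_comp_extTransversal (hR : ∀ x, QuotientGroup.mk (R x) = x) :
    evalTransversal H π R ∘ₗ extTransversal H π R = LinearMap.id := by
  refine LinearMap.ext fun v => funext fun y => ?_
  change evalAt H π (R y) (extTransversal H π R v) = v y
  rw [extTransversal, LinearMap.sum_apply, map_sum,
    Finset.sum_eq_single_of_mem y (Finset.mem_univ _)]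
  · exact congr($(evalAt_comp_extAt H π (R y)) (v y))
  · intro x _ hx
    refine evalAt_extAt_of_mul_inv_not_mem H π ?_ _
    rw [mul_inv_mem_iff_mk_eq H hR, hR]
    exact Ne.symm hx

def transversalEquiv (hR : ∀ x, QuotientGroup.mk (R x) = x) :
    ↥(IndSpace H π) ≃ₗ[ℂ] (G ⧸ H → V) :=
  .ofLinearMap (evalTransversal H π R) (extTransversal H π R)
    (evalTransversal_comp_extTransversal H π hR) (extTransversal_comp_evalTransversal H π hR)

lemma transversalEquiv_apply (hR : ∀ x, QuotientGroup.mk (R x) = x) (w : ↥(IndSpace H π))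
    (x : G ⧸ H) : transversalEquiv H π hR w x = evalAt H π (R x) w :=
  rfl

end Transversal

/-- For `H ◁ G` of finite index and a representation `π` of `H`, the
restriction of `Ind_H^G π` to `H` decomposes as `⊕_{g ∈ G/H} π^g`, realized by the
evaluation maps `e_g : w ↦ w g` (which intertwine `(Ind_H^G π)|_H` with the conjugate
representation `π^g`), with the extension-by-zero maps `e_g^*` as sections; the projectors
`p_g = e_g^* ∘ e_g` satisfy `p_s ∘ p_t = p_s` if `s ≡ t mod H`, `p_s ∘ p_t = 0` otherwise,
and `∑_{g ∈ G/H} p_g = Id`. -/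
theorem statement7 {G : Type u} [Group G] (H : Subgroup G) [H.Normal] [Fintype (G ⧸ H)]
    [DecidablePred (· ∈ H)]
    {V : Type u} [AddCommGroup V] [Module ℂ V] (π : Representation ℂ H V)
    (R : G ⧸ H → G) (hR : ∀ x, QuotientGroup.mk (R x) = x) :
    (∀ (g : G) (h : ↥H) (w : ↥(IndSpace H π)),
        evalAt H π g (indRep H π ↑h w) = conjRep H π g⁻¹ h (evalAt H π g w)) ∧
    (∀ g : G, evalAt H π g ∘ₗ extAt H π g = LinearMap.id) ∧
    (∀ s t : G, s * t⁻¹ ∈ H → projAt H π s ∘ₗ projAt H π t = projAt H π s) ∧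
    (∀ s t : G, s * t⁻¹ ∉ H → projAt H π s ∘ₗ projAt H π t = 0) ∧
    (∑ x : G ⧸ H, projAt H π (R x)) = LinearMap.id ∧
    ∃ e : ↥(IndSpace H π) ≃ₗ[ℂ] ((x : G ⧸ H) → V),
      (∀ (w : ↥(IndSpace H π)) (x : G ⧸ H), e w x = evalAt H π (R x) w) ∧
      (∀ (h : ↥H) (w : ↥(IndSpace H π)) (x : G ⧸ H),
        e (indRep H π ↑h w) x = conjRep H π (R x)⁻¹ h (e w x)) :=
  ⟨evalAt_indRep_of_mem H π, evalAt_comp_extAt H π,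
    fun _ _ => projAt_comp_projAt_of_mul_inv_mem H π,
    fun _ _ => projAt_comp_projAt_of_mul_inv_not_mem H π,
    sum_projAt_transversal H π hR, transversalEquiv H π hR,
    transversalEquiv_apply H π hR, fun h w x => evalAt_indRep_of_mem H π (R x) h w⟩
end
end

section
/- Let G be a group, H ◁ G of finite index with G/H abelian, and C a suitable full subcategory of representations of G (stable under twisting by characters of G/H and under tensoring by representations of G/H). For an endomorphism φ of the forgetful functor on C and g ∈ G, the following are equivalent: (1) φ composed with the action of g⁻¹ commutes with all H-intertwiners between objects of C; (2) for all π ∈ C and all representations ρ of G/H, φ(ρ⊗π) = ρ(g)⊗φ(π); (3) the same with ρ ranging only over irreducible representations of G/H. -/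
noncomputable section

open scoped TensorProduct DirectSum

universe u

/-- Tensor product of a representation of `G/H` with a representation of `G`
(`(ρ ⊗ π)(g) = ρ(gH) ⊗ π(g)`). -/
def tensorRepOn {G : Type u} [Group G] (H : Subgroup G) [H.Normal]
    (W : RepOn (G ⧸ H)) (P : RepOn G) : RepOn G where
  V := TensorProduct ℂ W.V P.V
  ρ :=
    { toFun := fun g => TensorProduct.map (W.ρ ((g : G ⧸ H))) (P.ρ g)
      map_one' := by
        try dsimp only
        rw [show ((1 : G) : G ⧸ H) = 1 by simp, map_one, map_one, TensorProduct.map_one]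
      map_mul' := by
        intro a b
        try dsimp only
        rw [show ((a * b : G) : G ⧸ H) = ((a : G ⧸ H)) * ((b : G ⧸ H)) by simp,
          map_mul, map_mul, TensorProduct.map_mul] }

/-! (1) ⇒ (2): for `w` in a representation `ρ` of `G/H`, the map `v ↦ w ⊗ v` is an
`H`-intertwiner `π → ρ ⊗ π` because `H` acts trivially on `ρ`; condition (1) applied to it
says exactly `φ(ρ ⊗ π)(w ⊗ v) = ρ(g) w ⊗ φ(π) v`.

(2) ⇒ (1): an `H`-intertwiner `α : π₁ → π₂` is fixed by `H` under conjugation, so its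
`G`-orbit descends to an equivariant family `c_q`, `q ∈ G/H`, with `c_{xH} = π₂(x) α π₁(x)⁻¹`.
Then `v ↦ ∑_q δ_q ⊗ c_q v` is a `G`-intertwiner from `π₁` to `λ ⊗ π₂`, where `λ` is the left
regular representation of `G/H`.  Naturality of `φ` along it, combined with (2) for `λ` and read
off at the coordinate `gH`, gives `c_{gH} φ(π₁) = φ(π₂) α`.

(3) ⇒ (2): since `G/H` is finite, every representation of it is spanned by its irreducible
subrepresentations (Maschke), and `φ` is natural along their inclusions tensored with `π`. -/

open TensorProduct

section Semisimple

variable {V : Type*} [AddCommGroup V] [Module ℂ V]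

theorem Subrepresentation.isIrreducibleRep_of_isAtom_s10 {M : Type*} [Monoid M]
    {ρ : Representation ℂ M V} {σ : Subrepresentation ρ} (hσ : IsAtom σ) :
    IsIrreducibleRep σ.toRepresentation := by
  refine ⟨?_, fun U hU => ?_⟩
  · obtain ⟨v, hv, hv0⟩ := Submodule.exists_mem_ne_zero_of_ne_bot
      fun h => hσ.1 (Subrepresentation.toSubmodule_injective h)
    exact ⟨⟨v, hv⟩, fun h => hv0 (congrArg Subtype.val h)⟩
  let τ : Subrepresentation ρ := ⟨U.map σ.toSubmodule.subtype, by
    rintro m _ ⟨u, hu, rfl⟩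
    exact ⟨_, hU m u hu, rfl⟩⟩
  have hτσ : τ ≤ σ := fun _ ⟨u, _, hu⟩ => hu ▸ u.2
  have map_inj := Submodule.map_injective_of_injective σ.toSubmodule.injective_subtype
  rcases hσ.le_iff.mp hτσ with h | h
  · exact .inl (map_inj ((congrArg Subrepresentation.toSubmodule h).trans
      (Submodule.map_bot _).symm))
  · exact .inr (map_inj ((congrArg Subrepresentation.toSubmodule h).trans
      (Submodule.map_subtype_top _).symm))

open scoped MonoidAlgebra in
theorem Representation.linearMap_ext_of_irreducible {Q : Type*} [Group Q] [Finite Q]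
    (ρ : Representation ℂ Q V) {N : Type*} [AddCommGroup N] [Module ℂ N] {f₁ f₂ : V →ₗ[ℂ] N}
    (h : ∀ σ : Subrepresentation ρ, IsIrreducibleRep σ.toRepresentation → ∀ x ∈ σ, f₁ x = f₂ x) :
    f₁ = f₂ := by
  ext x
  have hx : ρ.asModuleEquiv.symm x ∈
      sSup {m : Submodule ℂ[Q] ρ.asModule | IsSimpleModule ℂ[Q] m} := by
    rw [IsSemisimpleModule.sSup_simples_eq_top]
    trivial
  rw [sSup_eq_iSup'] at hx
  refine Submodule.iSup_induction _ hx
    (motive := fun y => f₁ (ρ.asModuleEquiv y) = f₂ (ρ.asModuleEquiv y)) ?_ (by simp)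
    fun y z hy hz => by simp [hy, hz]
  rintro ⟨N, hN⟩ y hy
  have hatom : IsAtom (Subrepresentation.subrepresentationSubmoduleOrderIso.symm N) := by
    rw [OrderIso.isAtom_iff]
    exact isSimpleModule_iff_isAtom.mp hN
  exact h _ (Subrepresentation.isIrreducibleRep_of_isAtom_s10 hatom) _ hy

end Semisimple

section Regular

variable {Q : Type u} [Group Q]

variable (Q) in
def Representation.leftRegularFun : Representation ℂ Q (Q → ℂ) where
  toFun a := LinearMap.funLeft ℂ ℂ (a⁻¹ * ·)
  map_one' := by ext; simp
  map_mul' a b := by ext; simp [mul_assoc]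

@[simp] lemma Representation.leftRegularFun_apply (a : Q) (f : Q → ℂ) (y : Q) :
    Representation.leftRegularFun Q a f y = f (a⁻¹ * y) :=
  rfl

variable (Q) in
abbrev RepOn.regular : RepOn Q := ⟨Q → ℂ, Representation.leftRegularFun Q⟩

abbrev RepOn.ofSubrepresentation (W : RepOn Q) (σ : Subrepresentation W.ρ) : RepOn Q :=
  ⟨σ.toSubmodule, σ.toRepresentation⟩

end Regular

section TensorPi

variable {ι : Type*} [Fintype ι] [DecidableEq ι]
  {V W : Type*} [AddCommGroup V] [Module ℂ V] [AddCommGroup W] [Module ℂ W]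

variable (ι V) in
def tensorPiEquiv : ((ι → ℂ) ⊗[ℂ] V) ≃ₗ[ℂ] (ι → V) :=
  TensorProduct.comm ℂ (ι → ℂ) V ≪≫ₗ piScalarRight ℂ ℂ V ι

@[simp] lemma tensorPiEquiv_tmul (f : ι → ℂ) (v : V) (i : ι) :
    tensorPiEquiv ι V (f ⊗ₜ v) i = f i • v := by
  simp [tensorPiEquiv]

def tensorPi (c : ι → V →ₗ[ℂ] W) : V →ₗ[ℂ] (ι → ℂ) ⊗[ℂ] W :=
  (tensorPiEquiv ι W).symm.toLinearMap ∘ₗ LinearMap.pi c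

@[simp] lemma tensorPiEquiv_tensorPi (c : ι → V →ₗ[ℂ] W) (v : V) (i : ι) :
    tensorPiEquiv ι W (tensorPi c v) i = c i v := by
  simp [tensorPi]

lemma tensorPiEquiv_map_leftRegularFun {Q : Type u} [Group Q] [Fintype Q] [DecidableEq Q]
    (a : Q) (T : V →ₗ[ℂ] W) (x : (Q → ℂ) ⊗[ℂ] V) (q : Q) :
    tensorPiEquiv Q W (map (Representation.leftRegularFun Q a) T x) q =
      T (tensorPiEquiv Q V x (a⁻¹ * q)) := by
  induction x using TensorProduct.induction_on with
  | zero => simp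
  | tmul f v => simp
  | add x y hx hy => simp_all

end TensorPi

section CosetOrbit

variable {G : Type*} [Group G] {H : Subgroup G} {V : Type*} [AddCommGroup V] [Module ℂ V]

def Representation.cosetOrbit (ρ : Representation ℂ G V) {v : V} (hv : ∀ h ∈ H, ρ h v = v) :
    G ⧸ H → V :=
  Quotient.lift (fun x => ρ x v) fun x y hxy => by
    rw [← mul_inv_cancel_left x y, map_mul, Module.End.mul_apply,
      hv _ (QuotientGroup.leftRel_apply.mp hxy)]

@[simp] lemma Representation.cosetOrbit_mk (ρ : Representation ℂ G V) {v : V}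
    (hv : ∀ h ∈ H, ρ h v = v) (x : G) : ρ.cosetOrbit hv x = ρ x v :=
  rfl

lemma Representation.cosetOrbit_mul [H.Normal] (ρ : Representation ℂ G V) {v : V}
    (hv : ∀ h ∈ H, ρ h v = v) (g : G) (q : G ⧸ H) :
    ρ.cosetOrbit hv (g * q) = ρ g (ρ.cosetOrbit hv q) := by
  induction q using QuotientGroup.induction_on with
  | H x => rw [← QuotientGroup.mk_mul, cosetOrbit_mk, cosetOrbit_mk, map_mul, Module.End.mul_apply]

lemma Representation.linHom_apply_eq_self {W : Type*} [AddCommGroup W] [Module ℂ W]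
    {ρV : Representation ℂ G V} {ρW : Representation ℂ G W} {g : G} {f : V →ₗ[ℂ] W}
    (hf : f ∘ₗ ρV g = ρW g ∘ₗ f) : linHom ρV ρW g f = f := by
  rw [linHom_apply, ← LinearMap.comp_assoc, ← hf, LinearMap.comp_assoc, ← Module.End.mul_eq_comp,
    ← map_mul, mul_inv_cancel, map_one, Module.End.one_eq_id, LinearMap.comp_id]

end CosetOrbit

section Tensor

variable {G : Type u} [Group G] {H : Subgroup G} [H.Normal]

lemma tensorRepOn_ρ (W : RepOn (G ⧸ H)) (P : RepOn G) (g : G) :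
    (tensorRepOn H W P).ρ g = map (W.ρ g) (P.ρ g) :=
  rfl

lemma tensorRepOn_ρ_of_mem (W : RepOn (G ⧸ H)) (P : RepOn G) {h : G} (hh : h ∈ H) :
    (tensorRepOn H W P).ρ h = (P.ρ h).lTensor W.V := by
  rw [tensorRepOn_ρ, (QuotientGroup.eq_one_iff h).mpr hh, map_one]
  rfl

lemma rTensor_comp_tensorRepOn_ρ {W₁ W₂ : RepOn (G ⧸ H)} (P : RepOn G) {f : W₁.V →ₗ[ℂ] W₂.V}
    (hf : ∀ a, f ∘ₗ W₁.ρ a = W₂.ρ a ∘ₗ f) (g : G) :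
    f.rTensor P.V ∘ₗ (tensorRepOn H W₁ P).ρ g = (tensorRepOn H W₂ P).ρ g ∘ₗ f.rTensor P.V := by
  refine TensorProduct.ext' fun w v => ?_
  show f (W₁.ρ g w) ⊗ₜ P.ρ g v = W₂.ρ g (f w) ⊗ₜ P.ρ g v
  rw [← LinearMap.comp_apply f, hf]
  rfl

lemma tensorPi_comp_ρ [Fintype (G ⧸ H)] [DecidableEq (G ⧸ H)] {P₁ P₂ : RepOn G}
    {c : G ⧸ H → P₁.V →ₗ[ℂ] P₂.V}
    (hc : ∀ (m : G) q, c (m * q) = Representation.linHom P₁.ρ P₂.ρ m (c q)) (m : G) :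
    tensorPi c ∘ₗ P₁.ρ m =
      map (Representation.leftRegularFun (G ⧸ H) m) (P₂.ρ m) ∘ₗ tensorPi c := by
  ext v : 1
  apply (tensorPiEquiv (G ⧸ H) P₂.V).injective
  ext q
  have hq : c q = Representation.linHom P₁.ρ P₂.ρ m (c ((m : G ⧸ H)⁻¹ * q)) := by
    rw [← hc, mul_inv_cancel_left]
  rw [LinearMap.comp_apply, LinearMap.comp_apply, tensorPiEquiv_map_leftRegularFun,
    tensorPiEquiv_tensorPi, tensorPiEquiv_tensorPi, hq, Representation.linHom_apply]
  simp

end Tensor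

section Equivalences

variable {G : Type u} [Group G] {H : Subgroup G} [H.Normal] {C : Set (RepOn G)}
  {φ : ∀ P : RepOn G, P.V →ₗ[ℂ] P.V} {g : G}

theorem Commutes.rTensor_comp (hφ : Commutes C φ)
    (htens : ∀ P ∈ C, ∀ W : RepOn (G ⧸ H), tensorRepOn H W P ∈ C) {P : RepOn G} (hP : P ∈ C)
    {W₁ W₂ : RepOn (G ⧸ H)} {f : W₁.V →ₗ[ℂ] W₂.V} (hf : ∀ a, f ∘ₗ W₁.ρ a = W₂.ρ a ∘ₗ f) :
    f.rTensor P.V ∘ₗ φ (tensorRepOn H W₁ P) = φ (tensorRepOn H W₂ P) ∘ₗ f.rTensor P.V :=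
  hφ _ (htens P hP W₁) _ (htens P hP W₂) _ (rTensor_comp_tensorRepOn_ρ P hf)

theorem tensorRepOn_eq_of_hCommutes
    (htens : ∀ P ∈ C, ∀ W : RepOn (G ⧸ H), tensorRepOn H W P ∈ C)
    (h1 : HCommutes H C (fun P => P.ρ g⁻¹ ∘ₗ φ P)) {P : RepOn G} (hP : P ∈ C)
    (W : RepOn (G ⧸ H)) : φ (tensorRepOn H W P) = map (W.ρ g) (φ P) := by
  refine TensorProduct.ext' fun w v => ?_
  have hw : ∀ h : H, mk ℂ W.V P.V w ∘ₗ P.ρ h = (tensorRepOn H W P).ρ h ∘ₗ mk ℂ W.V P.V w := by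
    intro h
    ext x
    rw [tensorRepOn_ρ_of_mem W P h.2]
    rfl
  have key : w ⊗ₜ P.ρ g⁻¹ (φ P v) = (tensorRepOn H W P).ρ g⁻¹ (φ _ (w ⊗ₜ v)) :=
    LinearMap.congr_fun (h1 P hP _ (htens P hP W) _ hw) v
  have key' := congrArg ((tensorRepOn H W P).ρ g) key
  rw [Representation.self_inv_apply] at key'
  refine key'.symm.trans ?_
  show W.ρ g w ⊗ₜ P.ρ g (P.ρ g⁻¹ (φ P v)) = W.ρ g w ⊗ₜ φ P v
  rw [Representation.self_inv_apply]

theorem hCommutes_of_tensorRepOn_regular [Finite (G ⧸ H)] (hφ : Commutes C φ)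
    (htens : ∀ P ∈ C, ∀ W : RepOn (G ⧸ H), tensorRepOn H W P ∈ C)
    (h2 : ∀ P ∈ C, φ (tensorRepOn H (RepOn.regular (G ⧸ H)) P) =
      map (Representation.leftRegularFun (G ⧸ H) g) (φ P)) :
    HCommutes H C (fun P => P.ρ g⁻¹ ∘ₗ φ P) := by
  classical
  cases nonempty_fintype (G ⧸ H)
  intro P₁ hP₁ P₂ hP₂ α hα
  let c := (Representation.linHom P₁.ρ P₂.ρ).cosetOrbit (H := H) (v := α)
    fun h hh => Representation.linHom_apply_eq_self (hα ⟨h, hh⟩)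
  have key := hφ P₁ hP₁ _ (htens P₂ hP₂ (RepOn.regular (G ⧸ H))) (tensorPi c)
    (tensorPi_comp_ρ fun m q => Representation.cosetOrbit_mul _ _ m q)
  rw [h2 P₂ hP₂] at key
  ext v
  have key' : tensorPiEquiv _ _ (tensorPi c (φ P₁ v)) (g : G ⧸ H) = tensorPiEquiv _ _
      (map (Representation.leftRegularFun (G ⧸ H) g) (φ P₂) (tensorPi c v)) (g : G ⧸ H) :=
    congr(tensorPiEquiv (G ⧸ H) P₂.V ($key v) (g : G ⧸ H))
  rw [tensorPiEquiv_map_leftRegularFun, tensorPiEquiv_tensorPi, tensorPiEquiv_tensorPi,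
    inv_mul_cancel, ← QuotientGroup.mk_one] at key'
  simp only [c, Representation.cosetOrbit_mk, map_one, Module.End.one_apply,
    Representation.linHom_apply, LinearMap.comp_apply] at key'
  simp only [LinearMap.comp_apply, ← key', Representation.inv_self_apply]

theorem tensorRepOn_eq_of_irreducible [Finite (G ⧸ H)] (hφ : Commutes C φ)
    (htens : ∀ P ∈ C, ∀ W : RepOn (G ⧸ H), tensorRepOn H W P ∈ C) {P : RepOn G} (hP : P ∈ C)
    (h3 : ∀ W : RepOn (G ⧸ H), IsIrreducibleRep W.ρ →
      φ (tensorRepOn H W P) = map (W.ρ g) (φ P))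
    (W : RepOn (G ⧸ H)) : φ (tensorRepOn H W P) = map (W.ρ g) (φ P) := by
  refine TensorProduct.ext (W.ρ.linearMap_ext_of_irreducible fun σ hσ x hx => ?_)
  refine LinearMap.ext fun v => ?_
  let Wσ := W.ofSubrepresentation σ
  have key := hφ.rTensor_comp htens hP (W₁ := Wσ) (f := σ.toSubmodule.subtype) fun a => rfl
  rw [h3 Wσ hσ] at key
  exact (LinearMap.congr_fun key (⟨x, hx⟩ ⊗ₜ v)).symm

end Equivalences

theorem statement10_general {G : Type u} [Group G] (H : Subgroup G) [H.Normal] [Finite (G ⧸ H)]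
    (C : Set (RepOn G))
    (htens : ∀ P ∈ C, ∀ W : RepOn (G ⧸ H), tensorRepOn H W P ∈ C)
    (φ : ∀ P : RepOn G, P.V →ₗ[ℂ] P.V) (hφ : Commutes C φ) (g : G) :
    (HCommutes H C (fun P => P.ρ g⁻¹ ∘ₗ φ P) ↔
      ∀ P ∈ C, ∀ W : RepOn (G ⧸ H),
        φ (tensorRepOn H W P) = TensorProduct.map (W.ρ ((g : G ⧸ H))) (φ P)) ∧
    ((∀ P ∈ C, ∀ W : RepOn (G ⧸ H),
        φ (tensorRepOn H W P) = TensorProduct.map (W.ρ ((g : G ⧸ H))) (φ P)) ↔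
      ∀ P ∈ C, ∀ W : RepOn (G ⧸ H), IsIrreducibleRep W.ρ →
        φ (tensorRepOn H W P) = TensorProduct.map (W.ρ ((g : G ⧸ H))) (φ P)) :=
  ⟨⟨fun h1 _ hP => tensorRepOn_eq_of_hCommutes htens h1 hP,
      fun h2 => hCommutes_of_tensorRepOn_regular hφ htens fun P hP => h2 P hP _⟩,
    ⟨fun h2 P hP W _ => h2 P hP W,
      fun h3 P hP => tensorRepOn_eq_of_irreducible hφ htens hP (h3 P hP)⟩⟩

/-- Let `H ◁ G` be of finite index with `G/H` abelian and `C` a class of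
representations of `G` stable under tensoring by representations of `G/H`.  For an
endomorphism `φ` of the forgetful functor on `C` and `g ∈ G`, the following are
equivalent: (1) `δ̂_{g⁻¹} φ` commutes with all `H`-intertwiners between members of `C`
(`φ` is supported in `gH`); (2) `φ(ρ ⊗ π) = ρ(g) ⊗ φ(π)` for all `π ∈ C` and all
representations `ρ` of `G/H`; (3) the same with `ρ` ranging only over the irreducible
representations of `G/H`. -/
theorem statement10 {G : Type u} [Group G] (H : Subgroup G) [H.Normal] [Finite (G ⧸ H)]
    (hab : ∀ a b : G ⧸ H, a * b = b * a)
    (C : Set (RepOn G))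
    (htens : ∀ P ∈ C, ∀ W : RepOn (G ⧸ H), tensorRepOn H W P ∈ C)
    (φ : ∀ P : RepOn G, P.V →ₗ[ℂ] P.V) (hφ : Commutes C φ) (g : G) :
    (HCommutes H C (fun P => P.ρ g⁻¹ ∘ₗ φ P) ↔
      ∀ P ∈ C, ∀ W : RepOn (G ⧸ H),
        φ (tensorRepOn H W P) = TensorProduct.map (W.ρ ((g : G ⧸ H))) (φ P)) ∧
    ((∀ P ∈ C, ∀ W : RepOn (G ⧸ H),
        φ (tensorRepOn H W P) = TensorProduct.map (W.ρ ((g : G ⧸ H))) (φ P)) ↔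
      ∀ P ∈ C, ∀ W : RepOn (G ⧸ H), IsIrreducibleRep W.ρ →
        φ (tensorRepOn H W P) = TensorProduct.map (W.ρ ((g : G ⧸ H))) (φ P)) :=
  statement10_general H C htens φ hφ g
end
end

section
/- Let G be a group and H ◁ G of finite index. Define the restriction of an endomorphism φ of the forgetful functor on a category C of representations of G by r_H^G(φ)(π) = e₁ ∘ φ(Ind_H^G π) ∘ e₁* for π in the category C_H generated by restrictions of objects of C. Then r_H^G(φ) commutes with all H-intertwiners, i.e. is an endomorphism of the forgetful functor on C_H. -/
noncomputable section

open scoped TensorProduct DirectSum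

universe u

/-! Induction is functorial: an `H`-intertwiner `α : σ₁ → σ₂` induces a `G`-intertwiner
`Ind α`, which commutes with `φ`. Evaluation at a point and extension by zero are natural in
`σ`, so `α ∘ e₁ = e₁ ∘ Ind α` and `Ind α ∘ e₁^* = e₁^* ∘ α` move `α` across the whole composite. -/

section IndMap

variable {G : Type u} [Group G] (H : Subgroup G)
variable {V₁ V₂ : Type u} [AddCommGroup V₁] [Module ℂ V₁] [AddCommGroup V₂] [Module ℂ V₂]
variable (ρ₁ : Representation ℂ H V₁) (ρ₂ : Representation ℂ H V₂)
variable (α : V₁ →ₗ[ℂ] V₂) (hα : ∀ (h : H) (v : V₁), α (ρ₁ h v) = ρ₂ h (α v))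

@[simp] lemma indMap_apply (w : ↥(IndSpace H ρ₁)) (x : G) :
    ((indMap H ρ₁ ρ₂ α hα w : ↥(IndSpace H ρ₂)) : G → V₂) x = α ((w : G → V₁) x) := rfl

lemma indMap_comp_indRep (g : G) :
    indMap H ρ₁ ρ₂ α hα ∘ₗ indRep H ρ₁ g = indRep H ρ₂ g ∘ₗ indMap H ρ₁ ρ₂ α hα := by
  ext w x
  simp only [LinearMap.comp_apply, indMap_apply, indRep_apply]

lemma indMap_comp_extAt [DecidablePred (· ∈ H)] (g : G) :
    indMap H ρ₁ ρ₂ α hα ∘ₗ extAt H ρ₁ g = extAt H ρ₂ g ∘ₗ α := by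
  ext v x
  simp only [LinearMap.comp_apply, indMap_apply]
  show α (if hx : x * g⁻¹ ∈ H then ρ₁ ⟨x * g⁻¹, hx⟩ v else 0)
      = if hx : x * g⁻¹ ∈ H then ρ₂ ⟨x * g⁻¹, hx⟩ (α v) else 0
  split_ifs
  · exact hα _ v
  · exact map_zero α

end IndMap

theorem statement13_general {G : Type u} [Group G] (H : Subgroup G)
    [DecidablePred (· ∈ H)]
    (C : Set (RepOn G)) (CH : Set (RepOn ↥H))
    (hInd : ∀ σ ∈ CH, indRepOn H σ ∈ C)
    (φ : ∀ P : RepOn G, P.V →ₗ[ℂ] P.V) (hφ : Commutes C φ) :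
    Commutes CH (fun σ => evalAt H σ.ρ 1 ∘ₗ φ (indRepOn H σ) ∘ₗ extAt H σ.ρ 1) := by
  intro σ₁ h₁ σ₂ h₂ α hα
  have hα' : ∀ (h : H) (v : σ₁.V), α (σ₁.ρ h v) = σ₂.ρ h (α v) :=
    fun h => LinearMap.congr_fun (hα h)
  set A := indMap H σ₁.ρ σ₂.ρ α hα'
  have hA : A ∘ₗ φ (indRepOn H σ₁) = φ (indRepOn H σ₂) ∘ₗ A :=
    hφ _ (hInd σ₁ h₁) _ (hInd σ₂ h₂) A (indMap_comp_indRep H σ₁.ρ σ₂.ρ α hα')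
  ext v
  calc α (evalAt H σ₁.ρ 1 (φ (indRepOn H σ₁) (extAt H σ₁.ρ 1 v)))
      = evalAt H σ₂.ρ 1 (A (φ (indRepOn H σ₁) (extAt H σ₁.ρ 1 v))) := rfl
    _ = evalAt H σ₂.ρ 1 (φ (indRepOn H σ₂) (A (extAt H σ₁.ρ 1 v))) :=
      congrArg (evalAt H σ₂.ρ 1) (LinearMap.congr_fun hA _)
    _ = evalAt H σ₂.ρ 1 (φ (indRepOn H σ₂) (extAt H σ₂.ρ 1 (α v))) :=
      congrArg (fun w => evalAt H σ₂.ρ 1 (φ (indRepOn H σ₂) w))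
        (LinearMap.congr_fun (indMap_comp_extAt H σ₁.ρ σ₂.ρ α hα' 1) v)

/-- Let `H ◁ G` be of finite index, `C` a class of representations of
`G`, `CH` a class of representations of `H` with `Ind_H^G σ ∈ C` for all `σ ∈ CH`.  If `φ`
is an endomorphism of the forgetful functor on `C`, then its restriction
`r_H^G(φ) : σ ↦ e₁ ∘ φ(Ind_H^G σ) ∘ e₁^*` commutes with all `H`-intertwiners between
members of `CH`, i.e. it is an endomorphism of the forgetful functor on `CH`. -/
theorem statement13 {G : Type u} [Group G] (H : Subgroup G) [H.Normal] [Finite (G ⧸ H)]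
    [DecidablePred (· ∈ H)]
    (C : Set (RepOn G)) (CH : Set (RepOn ↥H))
    (hInd : ∀ σ ∈ CH, indRepOn H σ ∈ C)
    (φ : ∀ P : RepOn G, P.V →ₗ[ℂ] P.V) (hφ : Commutes C φ) :
    Commutes CH (fun σ => evalAt H σ.ρ 1 ∘ₗ φ (indRepOn H σ) ∘ₗ extAt H σ.ρ 1) :=
  statement13_general H C CH hInd φ hφ
end
end

section
/- Let G be a locally profinite unimodular group, H ◁ G open of finite index, S a system of representatives of G/H. For F smooth compactly supported on G and π a smooth representation of H with Π = Ind_H^G π, one has e₁ ∘ Π(F) ∘ e₁* = π(F|_H), where F|_H denotes the restriction of F to H. That is, the restriction of endomorphisms r_H^G commutes with the Fourier transform: (F̂)|_H = (F|_H)^. -/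
noncomputable section

open scoped TensorProduct DirectSum

universe u

section InducedMatrixCoefficients

variable {G : Type u} [Group G] (H : Subgroup G)
variable {V : Type u} [AddCommGroup V] [Module ℂ V]

lemma comp_fourierT_comp {M : Type u} [Group M] {V₀ V₁ V₂ : Type*}
    [AddCommGroup V₀] [Module ℂ V₀] [AddCommGroup V₁] [Module ℂ V₁]
    [AddCommGroup V₂] [Module ℂ V₂] (F : M →₀ ℂ) (ρ : Representation ℂ M V₁)
    (L : V₁ →ₗ[ℂ] V₂) (R : V₀ →ₗ[ℂ] V₁) :
    L ∘ₗ fourierT F ρ ∘ₗ R = F.sum fun g c => c • (L ∘ₗ ρ g ∘ₗ R) := by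
  ext v
  simp [fourierT, Finsupp.sum, map_sum]

lemma evalAt_comp_indRep (ρ : Representation ℂ H V) (x g : G) :
    evalAt H ρ x ∘ₗ indRep H ρ g = evalAt H ρ (x * g) :=
  LinearMap.ext fun w => indRep_apply H ρ g w x

lemma evalAt_comp_extAt_s14 [DecidablePred (· ∈ H)] (ρ : Representation ℂ H V) (x g : G) :
    evalAt H ρ x ∘ₗ extAt H ρ g = if hx : x * g⁻¹ ∈ H then ρ ⟨x * g⁻¹, hx⟩ else 0 := by
  ext v
  split_ifs with hx
  · exact dif_pos hx
  · exact dif_neg hx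

lemma evalAt_one_comp_indRep_comp_extAt_one [DecidablePred (· ∈ H)]
    (ρ : Representation ℂ H V) (g : G) :
    evalAt H ρ 1 ∘ₗ indRep H ρ g ∘ₗ extAt H ρ 1 = if hg : g ∈ H then ρ ⟨g, hg⟩ else 0 := by
  rw [← LinearMap.comp_assoc, evalAt_comp_indRep, evalAt_comp_extAt_s14]
  simp only [one_mul, inv_one, mul_one]

end InducedMatrixCoefficients

theorem statement14_general {G : Type u} [Group G] (H : Subgroup G)
    [DecidablePred (· ∈ H)]
    {V : Type u} [AddCommGroup V] [Module ℂ V] (π : Representation ℂ H V)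
    (F : G →₀ ℂ) :
    evalAt H π 1 ∘ₗ fourierT F (indRep H π) ∘ₗ extAt H π 1 =
      F.sum fun g c => if hg : g ∈ H then c • (π ⟨g, hg⟩ : V →ₗ[ℂ] V) else 0 := by
  rw [comp_fourierT_comp]
  refine Finsupp.sum_congr fun g _ => ?_
  rw [evalAt_one_comp_indRep_comp_extAt_one]
  split_ifs <;> simp

/-- (The restriction of endomorphisms commutes with the Fourier
transform.)  For `H ◁ G` open of finite index, a finitely supported `F : G →₀ ℂ` (modelling
a smooth compactly supported function on a locally profinite group, with counting Haar
measure) and a representation `π` of `H` with `Π = Ind_H^G π`, one has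
`e₁ ∘ Π(F) ∘ e₁^* = π(F|_H)`, i.e. `r_H^G (F̂) = (F|_H)^`. -/
theorem statement14 {G : Type u} [Group G] (H : Subgroup G) [H.Normal] [Finite (G ⧸ H)]
    [DecidablePred (· ∈ H)]
    {V : Type u} [AddCommGroup V] [Module ℂ V] (π : Representation ℂ H V)
    (F : G →₀ ℂ) :
    evalAt H π 1 ∘ₗ fourierT F (indRep H π) ∘ₗ extAt H π 1 =
      F.sum fun g c => if hg : g ∈ H then c • (π ⟨g, hg⟩ : V →ₗ[ℂ] V) else 0 :=
  statement14_general H π F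
end
end
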